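/- arXiv:2502.04605 — 2 statements merged into one kernel-verified Lean document; each statement's English description precedes it below -/
import Mathlib

section
/- Let 𝒟 ⊆ ℝ^d be an open set, let ∂A ⊆ 𝒟 be a set, and suppose there are continuously differentiable maps ρ : 𝒟 → ℝ^d and h : 𝒟 → ℝ and a continuous map n : ∂A → ℝ^d with |n(y)| = 1 for y ∈ ∂A, such that for every x ∈ 𝒟 one has ρ(x) ∈ ∂A, h(ρ(x)) = 0, and x = ρ(x) + h(x)·n(ρ(x)) (tubular neighborhood data for ∂A). Let q, q̃ : ℝ^d → ℝ be twice continuously differentiable on 𝒟 with q(y) = q̃(y) = 0, ∇q(y)·n(y) > 0 and ∇q̃(y)·n(y) > 0 for all y ∈ ∂A, and q(x) > 0 for x ∈ 𝒟 with h(x) > 0. Then the function r defined on {x ∈ 𝒟 : h(x) ≥ 0} by r(x) = q̃(x)/q(x) when h(x) > 0 and r(x) = (∇q̃(ρ(x))·n(ρ(x)))/(∇q(ρ(x))·n(ρ(x))) when h(x) = 0 is continuous on {x ∈ 𝒟 : h(x) ≥ 0}. -/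
/-!
Write `M f x = ∫₀¹ ⟪∇f (ρ x + t h(x) n(ρ x)), n(ρ x)⟫ dt` for the mean normal derivative of `f`
along the normal segment from `ρ x` to `x`. If `f` vanishes on `∂A`, the fundamental theorem of
calculus along that segment gives `f x = h(x) · M f x`. Near a boundary point every such segment
stays in `𝒟`, so `M f` is continuous there, and on `∂A` it equals `⟪∇f, n⟫`. Hence near `∂A`
the ratio `r` coincides with `M q̃ / M q`, a quotient of continuous functions whose denominator
is positive at the boundary; away from `∂A`, `r = q̃ / q` with `q > 0`.
-/

open scoped RealInnerProductSpace

noncomputable section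

open Set Filter Topology

theorem ContinuousOn.intervalIntegral_of_prod {X F : Type*} [TopologicalSpace X]
    [NormedAddCommGroup F] [NormedSpace ℝ F] {g : X → ℝ → F} {V : Set X} {a b : ℝ}
    (hab : a ≤ b) (hg : ContinuousOn (Function.uncurry g) (V ×ˢ Icc a b)) :
    ContinuousOn (fun x => ∫ t in a..b, g x t) V := by
  rw [continuousOn_iff_continuous_domRestrict]
  -- Clamping `t` to `[a, b]` makes the integrand continuous without changing the integral.
  set clamp : ℝ → ℝ := fun t => projIcc a b hab t
  have hclamp : Continuous (Function.uncurry fun (x : V) t => g x (clamp t)) :=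
    hg.comp_continuous (f := fun p : V × ℝ => ((p.1 : X), clamp p.2)) (by fun_prop)
      fun p => ⟨p.1.2, (projIcc a b hab p.2).2⟩
  convert intervalIntegral.continuous_parametric_intervalIntegral_of_continuous'
    (μ := MeasureTheory.volume) hclamp a b using 1
  funext x
  refine intervalIntegral.integral_congr fun t ht => ?_
  rw [uIcc_of_le hab] at ht
  simp [clamp, projIcc_of_mem hab ht]

theorem eventually_forall_segment_mem {E : Type*} [NormedAddCommGroup E] [NormedSpace ℝ E]
    {ρ n : E → E} {h : E → ℝ} {U : Set E} {x₀ : E} (hU : U ∈ 𝓝 x₀)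
    (hρ : Tendsto ρ (𝓝 x₀) (𝓝 x₀)) (hh : Tendsto h (𝓝 x₀) (𝓝 0))
    (hn : ∀ᶠ x in 𝓝 x₀, ‖n (ρ x)‖ ≤ 1) :
    ∀ᶠ x in 𝓝 x₀, ∀ t ∈ Icc (0 : ℝ) 1, ρ x + (t * h x) • n (ρ x) ∈ U := by
  obtain ⟨ε, hε, hball⟩ := Metric.mem_nhds_iff.1 hU
  filter_upwards [Metric.tendsto_nhds.1 hρ (ε / 2) (half_pos hε),
    Metric.tendsto_nhds.1 hh (ε / 2) (half_pos hε), hn] with x hρx hhx hnx t ht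
  apply hball
  rw [Real.dist_0_eq_abs] at hhx
  have hstep : ‖(t * h x) • n (ρ x)‖ ≤ |h x| := by
    rw [norm_smul, Real.norm_eq_abs, abs_mul, abs_of_nonneg ht.1]
    calc t * |h x| * ‖n (ρ x)‖ ≤ 1 * |h x| * 1 := by gcongr; exact ht.2
      _ = |h x| := by ring
  calc dist (ρ x + (t * h x) • n (ρ x)) x₀ ≤ dist (ρ x) x₀ + ‖(t * h x) • n (ρ x)‖ := by
        rw [dist_eq_norm, dist_eq_norm, add_sub_right_comm]; exact norm_add_le _ _
    _ < ε := by linarith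

section InnerProductSpace

variable {E : Type*} [NormedAddCommGroup E] [InnerProductSpace ℝ E] [CompleteSpace E]

theorem ContDiffOn.continuousOn_gradient {f : E → ℝ} {U : Set E} {k : WithTop ℕ∞}
    (hf : ContDiffOn ℝ k f U) (hU : IsOpen U) (hk : 1 ≤ k) : ContinuousOn (gradient f) U :=
  (InnerProductSpace.toDual ℝ E).symm.continuous.comp_continuousOn
    (hf.continuousOn_fderiv_of_isOpen hU hk)

theorem eq_add_mul_integral_inner_gradient {f : E → ℝ} {U : Set E} (hU : IsOpen U)
    (hf : ContDiffOn ℝ 1 f U) {p v : E} {s : ℝ}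
    (hseg : ∀ t ∈ Icc (0 : ℝ) 1, p + (t * s) • v ∈ U) :
    f (p + s • v) = f p + s * ∫ t in (0 : ℝ)..1, ⟪gradient f (p + (t * s) • v), v⟫ := by
  have hseg' : ∀ t ∈ uIcc (0 : ℝ) 1, p + (t * s) • v ∈ U := by
    rwa [uIcc_of_le zero_le_one]
  have hderiv : ∀ t ∈ uIcc (0 : ℝ) 1, HasDerivAt (fun t : ℝ => f (p + (t * s) • v))
      (s * ⟪gradient f (p + (t * s) • v), v⟫) t := by
    intro t ht
    have hline : HasDerivAt (fun t : ℝ => p + (t * s) • v) (s • v) t := by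
      simpa using (((hasDerivAt_id t).mul_const s).smul_const v).const_add p
    have hfd := ((hf.differentiableOn one_ne_zero).differentiableAt
      (hU.mem_nhds (hseg' t ht))).hasFDerivAt
    have hslope : fderiv ℝ f (p + (t * s) • v) (s • v) =
        s * ⟪gradient f (p + (t * s) • v), v⟫ := by
      rw [map_smul, smul_eq_mul, gradient, InnerProductSpace.toDual_symm_apply]
    exact hslope ▸ hfd.comp_hasDerivAt t hline
  have hcont : ContinuousOn (fun t : ℝ => s * ⟪gradient f (p + (t * s) • v), v⟫)
      (uIcc (0 : ℝ) 1) :=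
    continuousOn_const.mul (((hf.continuousOn_gradient hU le_rfl).comp (by fun_prop)
      hseg').inner continuousOn_const)
  have hFTC := intervalIntegral.integral_eq_sub_of_hasDerivAt hderiv hcont.intervalIntegrable
  rw [intervalIntegral.integral_const_mul] at hFTC
  simp only [one_mul, zero_mul, zero_smul, add_zero] at hFTC
  linarith

variable (ρ : E → E) (h : E → ℝ) (n : E → E)

def meanNormalDeriv (f : E → ℝ) (x : E) : ℝ :=
  ∫ t in (0 : ℝ)..1, ⟪gradient f (ρ x + (t * h x) • n (ρ x)), n (ρ x)⟫

variable {ρ h n}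

theorem meanNormalDeriv_of_eq_zero {f : E → ℝ} {x : E} (hx : h x = 0) :
    meanNormalDeriv ρ h n f x = ⟪gradient f (ρ x), n (ρ x)⟫ := by
  simp [meanNormalDeriv, hx]

theorem eq_mul_meanNormalDeriv {f : E → ℝ} {U : Set E} (hU : IsOpen U)
    (hf : ContDiffOn ℝ 1 f U) {x : E} (hx : x = ρ x + h x • n (ρ x)) (hfρ : f (ρ x) = 0)
    (hseg : ∀ t ∈ Icc (0 : ℝ) 1, ρ x + (t * h x) • n (ρ x) ∈ U) :
    f x = h x * meanNormalDeriv ρ h n f x := by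
  calc f x = f (ρ x + h x • n (ρ x)) := congrArg f hx
    _ = h x * meanNormalDeriv ρ h n f x := by
      rw [eq_add_mul_integral_inner_gradient hU hf hseg, hfρ, zero_add, meanNormalDeriv]

theorem continuousOn_meanNormalDeriv {f : E → ℝ} {U V S : Set E} (hU : IsOpen U)
    (hf : ContDiffOn ℝ 1 f U) (hρ : ContinuousOn ρ V) (hh : ContinuousOn h V)
    (hn : ContinuousOn n S) (hρS : MapsTo ρ V S)
    (hseg : ∀ x ∈ V, ∀ t ∈ Icc (0 : ℝ) 1, ρ x + (t * h x) • n (ρ x) ∈ U) :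
    ContinuousOn (meanNormalDeriv ρ h n f) V := by
  have hnρ : ContinuousOn (fun x => n (ρ x)) V := hn.comp hρ hρS
  have hfst : MapsTo Prod.fst (V ×ˢ Icc (0 : ℝ) 1) V := fun p hp => hp.1
  have hpoint : ContinuousOn (fun p : E × ℝ => ρ p.1 + (p.2 * h p.1) • n (ρ p.1))
      (V ×ˢ Icc (0 : ℝ) 1) :=
    (hρ.comp continuousOn_fst hfst).add
      ((continuousOn_snd.mul (hh.comp continuousOn_fst hfst)).smul
        (hnρ.comp continuousOn_fst hfst))
  exact ContinuousOn.intervalIntegral_of_prod zero_le_one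
    (((hf.continuousOn_gradient hU le_rfl).comp hpoint fun p hp => hseg _ hp.1 _ hp.2).inner
      (hnρ.comp continuousOn_fst hfst))

theorem continuousAt_meanNormalDeriv {f : E → ℝ} {U S : Set E} (hU : IsOpen U)
    (hf : ContDiffOn ℝ 1 f U) (hρ : ContinuousOn ρ U) (hh : ContinuousOn h U)
    (hn : ContinuousOn n S) (hρS : MapsTo ρ U S) {x₀ : E} (hx₀ : x₀ ∈ U)
    (hseg : ∀ᶠ x in 𝓝 x₀, ∀ t ∈ Icc (0 : ℝ) 1, ρ x + (t * h x) • n (ρ x) ∈ U) :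
    ContinuousAt (meanNormalDeriv ρ h n f) x₀ := by
  obtain ⟨V, hV, hVopen, hx₀V⟩ := eventually_nhds_iff.1 (hseg.and (hU.mem_nhds hx₀))
  have hVU : V ⊆ U := fun x hx => (hV x hx).2
  exact (continuousOn_meanNormalDeriv hU hf (hρ.mono hVU) (hh.mono hVU) hn (hρS.mono_left hVU)
    fun x hx => (hV x hx).1).continuousAt (hVopen.mem_nhds hx₀V)

theorem ite_div_eq_meanNormalDeriv_div {q qt : E → ℝ} {U : Set E} (hU : IsOpen U)
    (hq : ContDiffOn ℝ 1 q U) (hqt : ContDiffOn ℝ 1 qt U) {x : E}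
    (hx : x = ρ x + h x • n (ρ x)) (hqρ : q (ρ x) = 0) (hqtρ : qt (ρ x) = 0) (hhx : 0 ≤ h x)
    (hseg : ∀ t ∈ Icc (0 : ℝ) 1, ρ x + (t * h x) • n (ρ x) ∈ U) :
    (if 0 < h x then qt x / q x
      else ⟪gradient qt (ρ x), n (ρ x)⟫ / ⟪gradient q (ρ x), n (ρ x)⟫) =
      meanNormalDeriv ρ h n qt x / meanNormalDeriv ρ h n q x := by
  split_ifs with hpos
  · rw [eq_mul_meanNormalDeriv hU hqt hx hqtρ hseg, eq_mul_meanNormalDeriv hU hq hx hqρ hseg,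
      mul_div_mul_left _ _ hpos.ne']
  · have hzero : h x = 0 := hhx.antisymm' (not_lt.1 hpos)
    rw [meanNormalDeriv_of_eq_zero hzero, meanNormalDeriv_of_eq_zero hzero]

end InnerProductSpace

theorem stmt6_general {d : ℕ} (𝒟 bdryA : Set (EuclideanSpace ℝ (Fin d)))
    (h𝒟 : IsOpen 𝒟)
    (ρ : EuclideanSpace ℝ (Fin d) → EuclideanSpace ℝ (Fin d))
    (h : EuclideanSpace ℝ (Fin d) → ℝ)
    (n : EuclideanSpace ℝ (Fin d) → EuclideanSpace ℝ (Fin d))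
    (hρ : ContDiffOn ℝ 1 ρ 𝒟) (hh : ContDiffOn ℝ 1 h 𝒟)
    (hn : ContinuousOn n bdryA) (hnorm : ∀ y ∈ bdryA, ‖n y‖ = 1)
    (htub : ∀ x ∈ 𝒟, ρ x ∈ bdryA ∧ h (ρ x) = 0 ∧ x = ρ x + h x • n (ρ x))
    (q qt : EuclideanSpace ℝ (Fin d) → ℝ)
    (hq : ContDiffOn ℝ 2 q 𝒟) (hqt : ContDiffOn ℝ 2 qt 𝒟)
    (hq0 : ∀ y ∈ bdryA, q y = 0) (hqt0 : ∀ y ∈ bdryA, qt y = 0)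
    (hqn : ∀ y ∈ bdryA, 0 < ⟪gradient q y, n y⟫)
    (hqpos : ∀ x ∈ 𝒟, 0 < h x → 0 < q x) :
    ContinuousOn
      (fun x => if 0 < h x then qt x / q x
        else ⟪gradient qt (ρ x), n (ρ x)⟫ / ⟪gradient q (ρ x), n (ρ x)⟫)
      {x ∈ 𝒟 | 0 ≤ h x} := by
  rintro x₀ ⟨hx₀D, hx₀h⟩
  have hD : 𝒟 ∈ 𝓝 x₀ := h𝒟.mem_nhds hx₀D
  have hρc : ContinuousAt ρ x₀ := hρ.continuousOn.continuousAt hD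
  have hhc : ContinuousAt h x₀ := hh.continuousOn.continuousAt hD
  rcases hx₀h.lt_or_eq' with hpos | hzero
  · have hcont : ContinuousAt (fun x => qt x / q x) x₀ :=
      (hqt.continuousOn.continuousAt hD).div (hq.continuousOn.continuousAt hD)
        (hqpos x₀ hx₀D hpos).ne'
    refine hcont.continuousWithinAt.congr_of_eventuallyEq ?_ (if_pos hpos)
    filter_upwards [nhdsWithin_le_nhds (hhc.eventually (lt_mem_nhds hpos))] with x hx
      using if_pos hx
  · have hx₀ρ : ρ x₀ = x₀ := by simpa [hzero] using (htub x₀ hx₀D).2.2.symm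
    have hseg : ∀ᶠ x in 𝓝 x₀, ∀ t ∈ Icc (0 : ℝ) 1, ρ x + (t * h x) • n (ρ x) ∈ 𝒟 :=
      eventually_forall_segment_mem hD (by simpa only [ContinuousAt, hx₀ρ] using hρc)
        (by simpa only [ContinuousAt, hzero] using hhc)
        (eventually_of_mem hD fun x hx => (hnorm _ (htub x hx).1).le)
    have hmean : ∀ f, ContDiffOn ℝ 2 f 𝒟 → ContinuousAt (meanNormalDeriv ρ h n f) x₀ :=
      fun f hf => continuousAt_meanNormalDeriv h𝒟 (hf.of_le one_le_two) hρ.continuousOn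
        hh.continuousOn hn (fun x hx => (htub x hx).1) hx₀D hseg
    have hq₀ : 0 < meanNormalDeriv ρ h n q x₀ := by
      rw [meanNormalDeriv_of_eq_zero hzero]
      exact hqn _ (htub x₀ hx₀D).1
    have hratio : ∀ x ∈ 𝒟, 0 ≤ h x →
        (∀ t ∈ Icc (0 : ℝ) 1, ρ x + (t * h x) • n (ρ x) ∈ 𝒟) → _ :=
      fun x hxD hx hxseg => ite_div_eq_meanNormalDeriv_div h𝒟 (hq.of_le one_le_two)
        (hqt.of_le one_le_two) (htub x hxD).2.2 (hq0 _ (htub x hxD).1) (hqt0 _ (htub x hxD).1)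
        hx hxseg
    refine ((hmean qt hqt).div (hmean q hq) hq₀.ne').continuousWithinAt.congr_of_eventuallyEq
      ?_ (hratio x₀ hx₀D hx₀h hseg.self_of_nhds)
    filter_upwards [nhdsWithin_le_nhds hseg, self_mem_nhdsWithin] with x hxseg hx
      using hratio x hx.1 hx.2 hxseg

theorem stmt6 {d : ℕ} (𝒟 bdryA : Set (EuclideanSpace ℝ (Fin d)))
    (h𝒟 : IsOpen 𝒟) (hsub : bdryA ⊆ 𝒟)
    (ρ : EuclideanSpace ℝ (Fin d) → EuclideanSpace ℝ (Fin d))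
    (h : EuclideanSpace ℝ (Fin d) → ℝ)
    (n : EuclideanSpace ℝ (Fin d) → EuclideanSpace ℝ (Fin d))
    (hρ : ContDiffOn ℝ 1 ρ 𝒟) (hh : ContDiffOn ℝ 1 h 𝒟)
    (hn : ContinuousOn n bdryA) (hnorm : ∀ y ∈ bdryA, ‖n y‖ = 1)
    (htub : ∀ x ∈ 𝒟, ρ x ∈ bdryA ∧ h (ρ x) = 0 ∧ x = ρ x + h x • n (ρ x))
    (q qt : EuclideanSpace ℝ (Fin d) → ℝ)
    (hq : ContDiffOn ℝ 2 q 𝒟) (hqt : ContDiffOn ℝ 2 qt 𝒟)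
    (hq0 : ∀ y ∈ bdryA, q y = 0) (hqt0 : ∀ y ∈ bdryA, qt y = 0)
    (hqn : ∀ y ∈ bdryA, 0 < ⟪gradient q y, n y⟫)
    (hqtn : ∀ y ∈ bdryA, 0 < ⟪gradient qt y, n y⟫)
    (hqpos : ∀ x ∈ 𝒟, 0 < h x → 0 < q x) :
    ContinuousOn
      (fun x => if 0 < h x then qt x / q x
        else ⟪gradient qt (ρ x), n (ρ x)⟫ / ⟪gradient q (ρ x), n (ρ x)⟫)
      {x ∈ 𝒟 | 0 ≤ h x} :=
  stmt6_general 𝒟 bdryA h𝒟 ρ h n hρ hh hn hnorm htub q qt hq hqt hq0 hqt0 hqn hqpos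
end
end

section
/- Let (Ω, 𝓕, Q) be a probability space with a filtration (𝓕_t)_{t ∈ [0,∞)}, let Z = (Z_t) be a nonnegative martingale with respect to (𝓕_t) and Q, with right-continuous sample paths and ∫ Z_t dQ = 1 for all t ≥ 0. Let P be a probability measure on (Ω, 𝓕) such that for every t ≥ 0, the restriction of P to 𝓕_t has density Z_t with respect to the restriction of Q to 𝓕_t. Let τ : Ω → [0,∞] be a stopping time for (𝓕_t) with P(τ < ∞) = 1 and Q(τ < ∞) = 1, and suppose that for every t ≥ 0 the optional sampling identity Z_{t ∧ τ} = E_Q[Z_t | 𝓕_{t ∧ τ}] holds Q-almost surely. Then for every set A in the stopping time σ-algebra 𝓕_τ, P(A) = ∫_A Z_τ dQ; that is, the restriction of P to 𝓕_τ has density Z_τ (the stopped value of Z at τ, defined on {τ < ∞}) with respect to the restriction of Q to 𝓕_τ. -/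
open MeasureTheory

noncomputable section

/-- The stopping-time σ-algebra `𝓕_τ = { A : A ∩ {τ ≤ t} ∈ 𝓕_t for all t ≥ 0 }` of an
(extended-value) stopping time `τ` for the filtration `𝓕`. -/
def stoppedSigma {Ω : Type*} (𝓕 : NNReal → MeasurableSpace Ω) (τ : Ω → ENNReal)
    (hτ : ∀ t : NNReal, MeasurableSet[𝓕 t] {ω | τ ω ≤ (t : ENNReal)}) :
    MeasurableSpace Ω where
  MeasurableSet' A := ∀ t : NNReal, MeasurableSet[𝓕 t] (A ∩ {ω | τ ω ≤ (t : ENNReal)})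
  measurableSet_empty := fun t => by simp
  measurableSet_compl A hA t := by
    have h1 : Aᶜ ∩ {ω | τ ω ≤ (t : ENNReal)}
        = {ω | τ ω ≤ (t : ENNReal)} \ (A ∩ {ω | τ ω ≤ (t : ENNReal)}) := by
      ext ω
      simp only [Set.mem_inter_iff, Set.mem_compl_iff, Set.mem_diff, Set.mem_setOf_eq]
      tauto
    rw [h1]
    exact (hτ t).diff (hA t)
  measurableSet_iUnion s hs t := by
    rw [Set.iUnion_inter]
    exact MeasurableSet.iUnion fun i => hs i t

/-!
On `A ∩ {τ ≤ t}` the stopping time `t ∧ τ` coincides with `τ`, and this set lies in `𝓕_{t ∧ τ}`.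
So the density `Z_t` of `P` on `𝓕_t` may be replaced there by `E_Q[Z_t | 𝓕_{t ∧ τ}] = Z_{t ∧ τ}`,
giving `P (A ∩ {τ ≤ t}) = ∫_{A ∩ {τ ≤ t}} Z_τ dQ`. Letting `t → ∞` along `ℕ` gives the identity
on `A`, because both `P` and `Z_τ • Q` live on `{τ < ∞}`.
-/

open scoped ENNReal NNReal

section

variable {Ω : Type*} {m0 : MeasurableSpace Ω}

theorem setLIntegral_ofReal_condExp {m : MeasurableSpace Ω} {μ : Measure[m0] Ω} (hm : m ≤ m0)
    [SigmaFinite (μ.trim hm)] {f : Ω → ℝ} (hf : Integrable f μ) (hf0 : 0 ≤ᵐ[μ] f)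
    {s : Set Ω} (hs : MeasurableSet[m] s) :
    ∫⁻ ω in s, ENNReal.ofReal (μ[f | m] ω) ∂μ = ∫⁻ ω in s, ENNReal.ofReal (f ω) ∂μ :=
  calc ∫⁻ ω in s, ENNReal.ofReal (μ[f | m] ω) ∂μ
      = ∫⁻ ω in s, μ⁻[fun x ↦ ENNReal.ofReal (f x) | m] ω ∂μ :=
        (lintegral_congr_ae (ae_restrict_of_ae (condLExp_ofReal m hf hf0))).symm
    _ = ∫⁻ ω in s, ENNReal.ofReal (f ω) ∂μ := setLIntegral_condLExp hm μ _ hs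

theorem setOf_lt_top_eq_iUnion_le_natCast (τ : Ω → ℝ≥0∞) :
    {ω | τ ω < ∞} = ⋃ n : ℕ, {ω | τ ω ≤ n} := by
  ext ω
  simp only [Set.mem_ofPred_eq, Set.mem_iUnion]
  exact ⟨fun h ↦ (ENNReal.exists_nat_gt h.ne).imp fun _ ↦ le_of_lt,
    fun ⟨n, hn⟩ ↦ hn.trans_lt (ENNReal.natCast_lt_top n)⟩

theorem measure_eq_iSup_inter_le_natCast (μ : Measure Ω) {τ : Ω → ℝ≥0∞}
    (hτ : μ {ω | τ ω < ∞}ᶜ = 0) (A : Set Ω) :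
    μ A = ⨆ n : ℕ, μ (A ∩ {ω | τ ω ≤ n}) := by
  rw [← measure_inter_conull hτ, setOf_lt_top_eq_iUnion_le_natCast, Set.inter_iUnion]
  exact Monotone.measure_iUnion fun n k hnk ↦
    Set.inter_subset_inter_right A fun ω (hω : τ ω ≤ n) ↦ hω.trans (by exact_mod_cast hnk)

section StoppedSigma

variable {τ : Ω → ℝ≥0∞}

theorem measurableSet_setOf_min_le {𝓕 : ℝ≥0 → MeasurableSpace Ω}
    (hτ : ∀ t : ℝ≥0, MeasurableSet[𝓕 t] {ω | τ ω ≤ t}) (t s : ℝ≥0) :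
    MeasurableSet[𝓕 s] {ω | min (t : ℝ≥0∞) (τ ω) ≤ s} := by
  by_cases hts : (t : ℝ≥0∞) ≤ s
  · convert MeasurableSet.univ
    simp [hts]
  · convert hτ s using 2
    simp [hts]

theorem stoppedSigma_le_of_le {𝓕 : ℝ≥0 → MeasurableSpace Ω}
    (hτ : ∀ t : ℝ≥0, MeasurableSet[𝓕 t] {ω | τ ω ≤ t}) {t : ℝ≥0} (hτt : ∀ ω, τ ω ≤ t) :
    stoppedSigma 𝓕 τ hτ ≤ 𝓕 t := fun A hA ↦ by
  simpa [Set.ofPred_forall, hτt] using hA t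

variable {𝓕 : Filtration ℝ≥0 m0}

theorem measurableSet_setOf_lt_top
    (hτ : ∀ t : ℝ≥0, MeasurableSet[𝓕 t] {ω | τ ω ≤ t}) : MeasurableSet {ω | τ ω < ∞} := by
  rw [setOf_lt_top_eq_iUnion_le_natCast]
  exact .iUnion fun n ↦ 𝓕.le n _ (by simpa using hτ n)

theorem measurableSet_stoppedSigma_min
    (hτ : ∀ t : ℝ≥0, MeasurableSet[𝓕 t] {ω | τ ω ≤ t}) {A : Set Ω}
    (hA : ∀ t : ℝ≥0, MeasurableSet[𝓕 t] (A ∩ {ω | τ ω ≤ t})) (t : ℝ≥0) :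
    MeasurableSet[stoppedSigma (fun s ↦ 𝓕 s) (fun ω ↦ min (t : ℝ≥0∞) (τ ω))
      (measurableSet_setOf_min_le hτ t)] (A ∩ {ω | τ ω ≤ t}) := fun (s : ℝ≥0) ↦ by
  by_cases hts : (t : ℝ≥0∞) ≤ s
  · convert 𝓕.mono (by exact_mod_cast hts) _ (hA t) using 1
    ext ω
    simp only [Set.mem_inter_iff, Set.mem_ofPred_eq, min_le_iff, hts, true_or, and_true]
  · convert hA s using 1
    ext ω
    simp only [Set.mem_inter_iff, Set.mem_ofPred_eq, min_le_iff, hts, false_or]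
    exact ⟨fun h ↦ ⟨h.1.1, h.2⟩, fun h ↦ ⟨⟨h.1, h.2.trans (le_of_not_ge hts)⟩, h.2⟩⟩

end StoppedSigma

theorem measure_inter_le_eq_setLIntegral_stoppedValue {Q P : Measure Ω} [IsFiniteMeasure Q]
    (𝓕 : Filtration ℝ≥0 m0) {Z : ℝ≥0 → Ω → ℝ} {t : ℝ≥0}
    (hZ : Integrable (Z t) Q) (hZ0 : 0 ≤ᵐ[Q] Z t)
    (hP : ∀ B : Set Ω, MeasurableSet[𝓕 t] B → P B = ∫⁻ ω in B, ENNReal.ofReal (Z t ω) ∂Q)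
    {τ : Ω → ℝ≥0∞} (hτ : ∀ t : ℝ≥0, MeasurableSet[𝓕 t] {ω | τ ω ≤ t})
    (hOS : (fun ω ↦ Z (min (t : ℝ≥0∞) (τ ω)).toNNReal ω) =ᵐ[Q]
      Q[Z t | stoppedSigma (fun s ↦ 𝓕 s) (fun ω ↦ min (t : ℝ≥0∞) (τ ω))
        (measurableSet_setOf_min_le hτ t)])
    {A : Set Ω} (hA : ∀ t : ℝ≥0, MeasurableSet[𝓕 t] (A ∩ {ω | τ ω ≤ t})) :
    P (A ∩ {ω | τ ω ≤ t}) =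
      ∫⁻ ω in A ∩ {ω | τ ω ≤ t}, ENNReal.ofReal (Z (τ ω).toNNReal ω) ∂Q := by
  have hle : stoppedSigma (fun s ↦ 𝓕 s) (fun ω ↦ min (t : ℝ≥0∞) (τ ω))
      (measurableSet_setOf_min_le hτ t) ≤ m0 :=
    (stoppedSigma_le_of_le _ fun _ ↦ min_le_left _ _).trans (𝓕.le t)
  rw [hP _ (hA t),
    ← setLIntegral_ofReal_condExp hle hZ hZ0 (measurableSet_stoppedSigma_min hτ hA t)]
  refine setLIntegral_congr_fun_ae (𝓕.le t _ (hA t)) ?_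
  filter_upwards [hOS] with ω hω hωA
  rw [← hω, min_eq_right hωA.2]

end

theorem stmt7_general {Ω : Type*} {m0 : MeasurableSpace Ω} (Q P : Measure Ω)
    [IsProbabilityMeasure Q] [IsProbabilityMeasure P]
    (𝓕 : Filtration NNReal m0)
    (Z : NNReal → Ω → ℝ)
    (hZmart : Martingale Z 𝓕 Q)
    (hZnonneg : ∀ t ω, 0 ≤ Z t ω)
    (hPdens : ∀ t : NNReal, ∀ A : Set Ω, MeasurableSet[𝓕 t] A →
      P A = ∫⁻ ω in A, ENNReal.ofReal (Z t ω) ∂Q)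
    (τ : Ω → ENNReal)
    (hτ : ∀ t : NNReal, MeasurableSet[𝓕 t] {ω | τ ω ≤ (t : ENNReal)})
    (hPτ : P {ω | τ ω < ⊤} = 1) (hQτ : Q {ω | τ ω < ⊤} = 1)
    (hOS : ∀ t : NNReal,
      ∀ hmin : ∀ s : NNReal,
        MeasurableSet[𝓕 s] {ω | min (t : ENNReal) (τ ω) ≤ (s : ENNReal)},
      (fun ω => Z (min (t : ENNReal) (τ ω)).toNNReal ω)
        =ᵐ[Q] Q[Z t | stoppedSigma (fun s => 𝓕 s) (fun ω => min (t : ENNReal) (τ ω)) hmin]) :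
    ∀ A : Set Ω, MeasurableSet[m0] A →
      (∀ t : NNReal, MeasurableSet[𝓕 t] (A ∩ {ω | τ ω ≤ (t : ENNReal)})) →
      P A = ∫⁻ ω in A, ENNReal.ofReal (Z (τ ω).toNNReal ω) ∂Q := by
  intro A _ hA
  set ν := Q.withDensity fun ω ↦ ENNReal.ofReal (Z (τ ω).toNNReal ω)
  have hfin := measurableSet_setOf_lt_top hτ
  have hPν (n : ℕ) : P (A ∩ {ω | τ ω ≤ n}) = ν (A ∩ {ω | τ ω ≤ n}) := by
    rw [withDensity_apply' _ _, ← ENNReal.coe_natCast]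
    exact measure_inter_le_eq_setLIntegral_stoppedValue 𝓕 (hZmart.integrable n)
      (.of_forall (hZnonneg n)) (hPdens n) hτ (hOS n _) hA
  calc P A = ⨆ n : ℕ, P (A ∩ {ω | τ ω ≤ n}) :=
        measure_eq_iSup_inter_le_natCast P ((prob_compl_eq_zero_iff hfin).2 hPτ) A
    _ = ⨆ n : ℕ, ν (A ∩ {ω | τ ω ≤ n}) := iSup_congr hPν
    _ = ν A := (measure_eq_iSup_inter_le_natCast ν
        (withDensity_absolutelyContinuous _ _ ((prob_compl_eq_zero_iff hfin).2 hQτ)) A).symm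
    _ = ∫⁻ ω in A, ENNReal.ofReal (Z (τ ω).toNNReal ω) ∂Q := withDensity_apply' _ A

theorem stmt7 {Ω : Type*} {m0 : MeasurableSpace Ω} (Q P : Measure Ω)
    [IsProbabilityMeasure Q] [IsProbabilityMeasure P]
    (𝓕 : Filtration NNReal m0)
    (Z : NNReal → Ω → ℝ)
    (hZmart : Martingale Z 𝓕 Q)
    (hZnonneg : ∀ t ω, 0 ≤ Z t ω)
    (hZrc : ∀ ω (t : NNReal), ContinuousWithinAt (fun s => Z s ω) (Set.Ici t) t)
    (hZint : ∀ t : NNReal, ∫ ω, Z t ω ∂Q = 1)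
    (hPdens : ∀ t : NNReal, ∀ A : Set Ω, MeasurableSet[𝓕 t] A →
      P A = ∫⁻ ω in A, ENNReal.ofReal (Z t ω) ∂Q)
    (τ : Ω → ENNReal)
    (hτ : ∀ t : NNReal, MeasurableSet[𝓕 t] {ω | τ ω ≤ (t : ENNReal)})
    (hPτ : P {ω | τ ω < ⊤} = 1) (hQτ : Q {ω | τ ω < ⊤} = 1)
    (hOS : ∀ t : NNReal,
      ∀ hmin : ∀ s : NNReal,
        MeasurableSet[𝓕 s] {ω | min (t : ENNReal) (τ ω) ≤ (s : ENNReal)},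
      (fun ω => Z (min (t : ENNReal) (τ ω)).toNNReal ω)
        =ᵐ[Q] Q[Z t | stoppedSigma (fun s => 𝓕 s) (fun ω => min (t : ENNReal) (τ ω)) hmin]) :
    ∀ A : Set Ω, MeasurableSet[m0] A →
      (∀ t : NNReal, MeasurableSet[𝓕 t] (A ∩ {ω | τ ω ≤ (t : ENNReal)})) →
      P A = ∫⁻ ω in A, ENNReal.ofReal (Z (τ ω).toNNReal ω) ∂Q :=
  stmt7_general Q P 𝓕 Z hZmart hZnonneg hPdens τ hτ hPτ hQτ hOS
end
end
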